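/- Let θ > 1, a₁, a₂, a₃, a₄ ∈ (0,∞) and p₁, q₁ ∈ (2θ,∞). Then the function h(t) = a₁t² + a₂t^{2θ} − a₃t^{p₁} − a₄t^{q₁} has a unique maximum point on [0,∞), and the maximum value h attains there is positive. -/

import Mathlib

/- Common framework for normalized solutions of Kirchhoff-Choquard equations
   (Goel-Gupta, "Normalized Solutions to the Kirchhoff-Choquard Equations with
   Combined Growth"). Functions are modelled as `u : EuclideanSpace ℝ (Fin N) → ℝ`. -/

open MeasureTheory Real Filter Topology RealInnerProductSpace

noncomputable section

abbrev Euc (N : ℕ) := EuclideanSpace ℝ (Fin N)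

/-- `‖∇u‖₂²`. -/
def gradNormSq (N : ℕ) (u : Euc N → ℝ) : ℝ := ∫ x, ‖gradient u x‖ ^ 2

/-- `‖u‖₂²`. -/
def l2NormSq (N : ℕ) (u : Euc N → ℝ) : ℝ := ∫ x, u x ^ 2

/-- membership in `H¹(ℝᴺ)`. -/
def MemH1 (N : ℕ) (u : Euc N → ℝ) : Prop :=
  MemLp u 2 (volume : Measure (Euc N)) ∧ Differentiable ℝ u ∧
    MemLp (fun x => gradient u x) 2 (volume : Measure (Euc N))

/-- squared `H¹` norm. -/
def h1NormSq (N : ℕ) (u : Euc N → ℝ) : ℝ := l2NormSq N u + gradNormSq N u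

/-- `∫ ∇u·∇v`. -/
def gradInner (N : ℕ) (u v : Euc N → ℝ) : ℝ := ∫ x, ⟪gradient u x, gradient v x⟫

/-- `∫ u v`. -/
def l2Pair (N : ℕ) (u v : Euc N → ℝ) : ℝ := ∫ x, u x * v x

/-- the nonlocal Choquard term `∫ (I_μ ∗ |u|^t) |u|^t`. -/
def rieszTerm (N : ℕ) (μ t : ℝ) (u : Euc N → ℝ) : ℝ :=
  ∫ x, ∫ y, |u x| ^ t * |u y| ^ t / ‖x - y‖ ^ μ

/-- `∫ (I_μ ∗ |u|^t) |u|^{t-2} u v`. -/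
def rieszPair (N : ℕ) (μ t : ℝ) (u v : Euc N → ℝ) : ℝ :=
  ∫ x, (∫ y, |u y| ^ t / ‖x - y‖ ^ μ) * |u x| ^ (t - 2) * u x * v x

/-- the energy functional `J_α`. -/
def Jfun (N : ℕ) (a b θ μ α q p : ℝ) (u : Euc N → ℝ) : ℝ :=
  a / 2 * gradNormSq N u + b / (2 * θ) * gradNormSq N u ^ θ
    - α / (2 * q) * rieszTerm N μ q u - 1 / (2 * p) * rieszTerm N μ p u

/-- membership in the sphere `S_c`. -/
def InSc (N : ℕ) (c : ℝ) (u : Euc N → ℝ) : Prop := MemH1 N u ∧ l2NormSq N u = c ^ 2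

def IsRadial (N : ℕ) (u : Euc N → ℝ) : Prop := ∀ x y : Euc N, ‖x‖ = ‖y‖ → u x = u y

def IsRadialDecreasing (N : ℕ) (u : Euc N → ℝ) : Prop :=
  ∀ x y : Euc N, ‖x‖ ≤ ‖y‖ → u y ≤ u x

/-- `δ_r = (N(r-2)+μ)/(2r)`. -/
def deltaExp (N : ℕ) (μ r : ℝ) : ℝ := ((N : ℝ) * (r - 2) + μ) / (2 * r)

/-- the upper critical exponent `2*_μ = (2N-μ)/(N-2)`. -/
def tmu (N : ℕ) (μ : ℝ) : ℝ := (2 * (N : ℝ) - μ) / ((N : ℝ) - 2)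

/-- the Pohozaev functional `P_α`. -/
def Pfun (N : ℕ) (a b θ μ α q p : ℝ) (u : Euc N → ℝ) : ℝ :=
  a * gradNormSq N u + b * gradNormSq N u ^ θ
    - deltaExp N μ q * α * rieszTerm N μ q u - deltaExp N μ p * rieszTerm N μ p u

/-- the (Gateaux) derivative of `J_α` at `u` in direction `v`. -/
def Jderiv (N : ℕ) (a b θ μ α q p : ℝ) (u v : Euc N → ℝ) : ℝ :=
  (a + b * gradNormSq N u ^ (θ - 1)) * gradInner N u v
    - α * rieszPair N μ q u v - rieszPair N μ p u v

/-- `u ∈ S_c` is a weak solution of problem (1.1) with Lagrange multiplier `lam`. -/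
def IsSolution (N : ℕ) (a b θ μ α q p c lam : ℝ) (u : Euc N → ℝ) : Prop :=
  InSc N c u ∧ ∀ v : Euc N → ℝ, MemH1 N v →
    (a + b * gradNormSq N u ^ (θ - 1)) * gradInner N u v =
      lam * l2Pair N u v + α * rieszPair N μ q u v + rieszPair N μ p u v

/-- `u` is a critical point of `J_α|_{S_c}`. -/
def IsCriticalPt (N : ℕ) (a b θ μ α q p c : ℝ) (u : Euc N → ℝ) : Prop :=
  ∃ lam : ℝ, IsSolution N a b θ μ α q p c lam u

/-- `u` is a ground state solution of `J_α|_{S_c}`. -/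
def IsGroundState (N : ℕ) (a b θ μ α q p c : ℝ) (u : Euc N → ℝ) : Prop :=
  IsCriticalPt N a b θ μ α q p c u ∧
    ∀ v, IsCriticalPt N a b θ μ α q p c v →
      Jfun N a b θ μ α q p u ≤ Jfun N a b θ μ α q p v

/-- the sharp Gagliardo-Nirenberg constant `C_r`. -/
def GNsharp (N : ℕ) (μ r : ℝ) : ℝ :=
  sInf {C : ℝ | 0 ≤ C ∧ ∀ u : Euc N → ℝ, MemH1 N u →
    rieszTerm N μ r u ≤
      C * gradNormSq N u ^ (r * deltaExp N μ r) * l2NormSq N u ^ (r * (1 - deltaExp N μ r))}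

/-- the Hardy-Littlewood-Sobolev best constant `S_{HL}`. -/
def S_HL (N : ℕ) (μ : ℝ) : ℝ :=
  sInf {t : ℝ | ∃ u : Euc N → ℝ, Differentiable ℝ u ∧
    MemLp (fun x => gradient u x) 2 (volume : Measure (Euc N)) ∧ u ≠ 0 ∧
    t = gradNormSq N u / rieszTerm N μ (tmu N μ) u ^ (((N : ℝ) - 2) / (2 * (N : ℝ) - μ))}

/-- `C_r` for `r < 2*_μ`, and `S_HL^{-2*_μ}` for `r = 2*_μ`. -/
def Cconst (N : ℕ) (μ r : ℝ) : ℝ :=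
  if r = tmu N μ then S_HL N μ ^ (-(tmu N μ)) else GNsharp N μ r

/-- the threshold `α₁` of (2.6). -/
def alpha1 (N : ℕ) (μ θ b c q p : ℝ) : ℝ :=
  (b * (θ - q * deltaExp N μ q) /
      (deltaExp N μ p * (p * deltaExp N μ p - q * deltaExp N μ q) * Cconst N μ p *
        c ^ (2 * p * (1 - deltaExp N μ p)))) ^
    ((θ - q * deltaExp N μ q) / (p * deltaExp N μ p - θ)) *
  (b * (p * deltaExp N μ p - θ) /
    (deltaExp N μ q * (p * deltaExp N μ p - q * deltaExp N μ q) * Cconst N μ q *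
      c ^ (2 * q * (1 - deltaExp N μ q))))

/-- the constant `κ` of (2.9). -/
def kappaConst (N : ℕ) (μ θ q p : ℝ) : ℝ :=
  (θ * (θ - q * deltaExp N μ q) * (θ - 1) /
      (p * deltaExp N μ p * (p * deltaExp N μ p - q * deltaExp N μ q) *
        (p * deltaExp N μ p - 1))) ^
    ((θ - q * deltaExp N μ q) / (p * deltaExp N μ p - θ)) -
  (θ * (θ - q * deltaExp N μ q) * (θ - 1) /
      (p * deltaExp N μ p * (p * deltaExp N μ p - q * deltaExp N μ q) *
        (p * deltaExp N μ p - 1))) ^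
    ((p * deltaExp N μ p - q * deltaExp N μ q) / (p * deltaExp N μ p - θ))

/-- the threshold `α₂` of (2.7). -/
def alpha2 (N : ℕ) (μ θ a b c q p : ℝ) : ℝ :=
  kappaConst N μ θ q p * q / Cconst N μ q *
    (a / c ^ (2 * q * (1 - deltaExp N μ q) +
        2 * p * (1 - deltaExp N μ p) * (1 - q * deltaExp N μ q) / (p * deltaExp N μ p - θ)) *
      (b * p / (θ * Cconst N μ p)) ^ ((1 - q * deltaExp N μ q) / (p * deltaExp N μ p - θ)) +
    2 / c ^ (2 * q * (1 - deltaExp N μ q) +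
        2 * p * (1 - deltaExp N μ p) * (θ - q * deltaExp N μ q) / (p * deltaExp N μ p - θ)) *
      ((b / (2 * θ)) ^ ((p * deltaExp N μ p - q * deltaExp N μ q) / (p * deltaExp N μ p - θ)) /
        (Cconst N μ p / (2 * p)) ^ ((θ - q * deltaExp N μ q) / (p * deltaExp N μ p - θ))))

/-- the threshold `α₃` of (2.8). -/
def alpha3 (N : ℕ) (μ θ a b c q : ℝ) : ℝ :=
  ((S_HL N μ ^ (θ + 1) * (4 * a * b)) ^ (tmu N μ / (2 * tmu N μ - (θ + 1))) *
      (q / (θ - q * deltaExp N μ q))) ^ ((θ - q * deltaExp N μ q) / θ) *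
    (b / deltaExp N μ q) ^ (q * deltaExp N μ q / θ) * (tmu N μ - θ) /
    ((tmu N μ - q * deltaExp N μ q) * Cconst N μ q * c ^ (2 * q * (1 - deltaExp N μ q)))

/-- `Υ_{t₀} = {u ∈ S_c : ‖∇u‖₂ < t₀}`. -/
def Upsilon (N : ℕ) (c t₀ : ℝ) : Set (Euc N → ℝ) :=
  {u | InSc N c u ∧ Real.sqrt (gradNormSq N u) < t₀}

/-- the comparison function `g` of Lemma 4.3. -/
def gComp (N : ℕ) (a b θ μ α q p c : ℝ) (t : ℝ) : ℝ :=
  a / 2 * t ^ (2 : ℝ) + b / (2 * θ) * t ^ (2 * θ)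
    - α / (2 * q) * Cconst N μ q * c ^ (2 * q * (1 - deltaExp N μ q)) *
        t ^ (2 * q * deltaExp N μ q)
    - 1 / (2 * p) * Cconst N μ p * c ^ (2 * p * (1 - deltaExp N μ p)) *
        t ^ (2 * p * deltaExp N μ p)

/-- `t₀` is the first zero of `g` on `(0,∞)`. -/
def IsFirstZero (g : ℝ → ℝ) (t₀ : ℝ) : Prop :=
  0 < t₀ ∧ g t₀ = 0 ∧ ∀ t, 0 < t → t < t₀ → g t ≠ 0

/-- the dilation `(s ⋆ u)(x) = e^{Ns/2} u(e^s x)`. -/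
def starMap (N : ℕ) (s : ℝ) (u : Euc N → ℝ) : Euc N → ℝ :=
  fun x => Real.exp ((N : ℝ) * s / 2) * u (Real.exp s • x)

/-- the fiber map `E_u(s) = J_α(s ⋆ u)`. -/
def fiberE (N : ℕ) (a b θ μ α q p : ℝ) (u : Euc N → ℝ) (s : ℝ) : ℝ :=
  Jfun N a b θ μ α q p (starMap N s u)

/-- `(E_u)''(0)` in closed form. -/
def fiberE2 (N : ℕ) (a b θ μ α q p : ℝ) (u : Euc N → ℝ) : ℝ :=
  2 * a * gradNormSq N u + 2 * θ * b * gradNormSq N u ^ θ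
    - α * (2 * q) * deltaExp N μ q ^ 2 * rieszTerm N μ q u
    - 2 * p * deltaExp N μ p ^ 2 * rieszTerm N μ p u

/-- the Pohozaev manifold `𝔓_α`. -/
def Pman (N : ℕ) (a b θ μ α q p c : ℝ) : Set (Euc N → ℝ) :=
  {u | InSc N c u ∧ Pfun N a b θ μ α q p u = 0}

def PmanPlus (N : ℕ) (a b θ μ α q p c : ℝ) : Set (Euc N → ℝ) :=
  {u | u ∈ Pman N a b θ μ α q p c ∧ 0 < fiberE2 N a b θ μ α q p u}

def PmanMinus (N : ℕ) (a b θ μ α q p c : ℝ) : Set (Euc N → ℝ) :=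
  {u | u ∈ Pman N a b θ μ α q p c ∧ fiberE2 N a b θ μ α q p u < 0}

def PmanZero (N : ℕ) (a b θ μ α q p c : ℝ) : Set (Euc N → ℝ) :=
  {u | u ∈ Pman N a b θ μ α q p c ∧ fiberE2 N a b θ μ α q p u = 0}

/-- a Palais-Smale sequence for `J_α|_{S_c}` at level `l` (Lagrange-multiplier form). -/
def IsPalaisSmale (N : ℕ) (a b θ μ α q p c l : ℝ) (un : ℕ → Euc N → ℝ) : Prop :=
  (∀ n, InSc N c (un n)) ∧
  Tendsto (fun n => Jfun N a b θ μ α q p (un n)) atTop (𝓝 l) ∧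
  ∃ lam : ℕ → ℝ, ∃ ε : ℕ → ℝ, Tendsto ε atTop (𝓝 0) ∧
    ∀ n, ∀ v : Euc N → ℝ, MemH1 N v → h1NormSq N v ≤ 1 →
      |Jderiv N a b θ μ α q p (un n) v - lam n * l2Pair N (un n) v| ≤ ε n

/-- strong convergence in `H¹(ℝᴺ)`. -/
def StrongH1Tendsto (N : ℕ) (un : ℕ → Euc N → ℝ) (u : Euc N → ℝ) : Prop :=
  Tendsto (fun n => h1NormSq N (fun x => un n x - u x)) atTop (𝓝 0)

/-- weak convergence in `H¹(ℝᴺ)`. -/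
def WeakH1Tendsto (N : ℕ) (un : ℕ → Euc N → ℝ) (u : Euc N → ℝ) : Prop :=
  ∀ v : Euc N → ℝ, MemH1 N v →
    Tendsto (fun n => l2Pair N (un n) v + gradInner N (un n) v) atTop
      (𝓝 (l2Pair N u v + gradInner N u v))

/-- the scalar function `h(t) = a₁t² + a₂t^{2θ} - a₃t^{p₁} - a₄t^{q₁}` of Lemma 5.1. -/
def hfun (θ a1 a2 a3 a4 p1 q1 : ℝ) (t : ℝ) : ℝ :=
  a1 * t ^ (2 : ℝ) + a2 * t ^ (2 * θ) - a3 * t ^ p1 - a4 * t ^ q1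

/-! For `t > 0`, `h'(t) = t^{2θ-1} k(t)` with
`k(t) = 2a₁t^{2-2θ} + 2θa₂ - p₁a₃t^{p₁-2θ} - q₁a₄t^{q₁-2θ}`. Since `θ > 1` and `p₁, q₁ > 2θ`,
every power in `k` moves it downwards, so `k` decreases strictly from `+∞` (at `0⁺`) to `-∞`
(at `∞`) and vanishes at exactly one point `t*`. Hence `h` increases strictly on `[0, t*]` and
decreases strictly on `[t*, ∞)`; as `h(0) = 0`, the unique maximum point is `t*` and `h(t*) > 0`. -/

open Set

section Unimodal

variable {f : ℝ → ℝ} {a c : ℝ}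

theorem lt_of_strictMonoOn_Icc_of_strictAntiOn_Ici (hmono : StrictMonoOn f (Icc a c))
    (hanti : StrictAntiOn f (Ici c)) {t : ℝ} (hat : a ≤ t) (htc : t ≠ c) : f t < f c := by
  rcases htc.lt_or_gt with htc | htc
  · exact hmono ⟨hat, htc.le⟩ ⟨hat.trans htc.le, le_rfl⟩ htc
  · exact hanti self_mem_Ici htc.le htc

theorem strictMonoOn_Icc_of_hasDerivAt_pos {f' : ℝ → ℝ} (hf : ContinuousOn f (Icc a c))
    (hf' : ∀ t ∈ Ioo a c, HasDerivAt f (f' t) t) (hpos : ∀ t ∈ Ioo a c, 0 < f' t) :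
    StrictMonoOn f (Icc a c) :=
  strictMonoOn_of_deriv_pos (convex_Icc a c) hf fun t ht => by
    rw [interior_Icc] at ht
    rw [(hf' t ht).deriv]
    exact hpos t ht

theorem strictAntiOn_Ici_of_hasDerivAt_neg {f' : ℝ → ℝ} (hf : ContinuousOn f (Ici c))
    (hf' : ∀ t ∈ Ioi c, HasDerivAt f (f' t) t) (hneg : ∀ t ∈ Ioi c, f' t < 0) :
    StrictAntiOn f (Ici c) :=
  strictAntiOn_of_deriv_neg (convex_Ici c) hf fun t ht => by
    rw [interior_Ici] at ht
    rw [(hf' t ht).deriv]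
    exact hneg t ht

end Unimodal

theorem exists_mem_Ioi_eq_zero_of_tendsto {k : ℝ → ℝ} {a : ℝ} (hk : ContinuousOn k (Ioi a))
    (hleft : Tendsto k (𝓝[>] a) atTop) (hright : Tendsto k atTop atBot) :
    ∃ c ∈ Ioi a, k c = 0 := by
  obtain ⟨t₁, hkt₁, ht₁⟩ := ((hleft.eventually_gt_atTop 0).and self_mem_nhdsWithin).exists
  obtain ⟨t₂, hkt₂, ht₁₂⟩ :=
    ((hright.eventually_lt_atBot 0).and (eventually_gt_atTop t₁)).exists
  obtain ⟨c, hc, hkc⟩ := intermediate_value_Icc' ht₁₂.le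
    (hk.mono fun t ht => ht₁.trans_le ht.1) ⟨hkt₂.le, hkt₁.le⟩
  exact ⟨c, ht₁.trans_le hc.1, hkc⟩

section hfun

variable {θ a1 a2 a3 a4 p1 q1 : ℝ}

variable (θ a1 a2 a3 a4 p1 q1) in
def hfunDerivFactor (t : ℝ) : ℝ :=
  2 * a1 * t ^ (2 - 2 * θ) + 2 * θ * a2 - p1 * a3 * t ^ (p1 - 2 * θ) - q1 * a4 * t ^ (q1 - 2 * θ)

theorem hfun_zero (hθ : θ ≠ 0) (hp1 : p1 ≠ 0) (hq1 : q1 ≠ 0) :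
    hfun θ a1 a2 a3 a4 p1 q1 0 = 0 := by
  simp [hfun, hθ, hp1, hq1]

theorem continuous_hfun (hθ : 0 ≤ θ) (hp1 : 0 ≤ p1) (hq1 : 0 ≤ q1) :
    Continuous (hfun θ a1 a2 a3 a4 p1 q1) := by
  unfold hfun
  have := continuous_rpow_const (q := 2) zero_le_two
  have := continuous_rpow_const (mul_nonneg zero_le_two hθ)
  have := continuous_rpow_const hp1
  have := continuous_rpow_const hq1
  fun_prop

theorem hasDerivAt_hfun {t : ℝ} (ht : 0 < t) :
    HasDerivAt (hfun θ a1 a2 a3 a4 p1 q1)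
      (t ^ (2 * θ - 1) * hfunDerivFactor θ a1 a2 a3 a4 p1 q1 t) t := by
  have hpow (r : ℝ) : HasDerivAt (fun s : ℝ => s ^ r) (r * t ^ (r - 1)) t :=
    hasDerivAt_rpow_const (Or.inl ht.ne')
  have hmul (r : ℝ) : t ^ (2 * θ - 1) * t ^ (r - 2 * θ) = t ^ (r - 1) := by
    rw [← rpow_add ht]
    ring_nf
  have hderiv := ((((hpow 2).const_mul a1).add ((hpow (2 * θ)).const_mul a2)).sub
    ((hpow p1).const_mul a3)).sub ((hpow q1).const_mul a4)
  refine hderiv.congr_deriv ?_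
  rw [← hmul 2, ← hmul p1, ← hmul q1, hfunDerivFactor]
  ring

theorem continuousOn_hfunDerivFactor :
    ContinuousOn (hfunDerivFactor θ a1 a2 a3 a4 p1 q1) (Ioi 0) := by
  intro t ht
  have hpow (r : ℝ) : ContinuousAt (fun s : ℝ => s ^ r) t :=
    continuousAt_rpow_const t r (Or.inl (ne_of_gt ht))
  unfold hfunDerivFactor
  exact ((((hpow _).const_mul _).add continuousAt_const).sub ((hpow _).const_mul _)).sub
    ((hpow _).const_mul _) |>.continuousWithinAt

theorem strictAntiOn_hfunDerivFactor (hθ : 1 < θ) (ha1 : 0 < a1) (ha3 : 0 < a3) (ha4 : 0 < a4)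
    (hp1 : 2 * θ < p1) (hq1 : 2 * θ < q1) :
    StrictAntiOn (hfunDerivFactor θ a1 a2 a3 a4 p1 q1) (Ioi 0) := by
  intro s hs t ht hst
  have h2 : t ^ (2 - 2 * θ) < s ^ (2 - 2 * θ) := rpow_lt_rpow_of_neg hs hst (by linarith)
  have hp : s ^ (p1 - 2 * θ) < t ^ (p1 - 2 * θ) := rpow_lt_rpow hs.le hst (by linarith)
  have hq : s ^ (q1 - 2 * θ) < t ^ (q1 - 2 * θ) := rpow_lt_rpow hs.le hst (by linarith)
  have hp1a3 : 0 < p1 * a3 := mul_pos (by linarith) ha3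
  have hq1a4 : 0 < q1 * a4 := mul_pos (by linarith) ha4
  unfold hfunDerivFactor
  linarith [mul_lt_mul_of_pos_left h2 (by linarith : (0 : ℝ) < 2 * a1),
    mul_lt_mul_of_pos_left hp hp1a3, mul_lt_mul_of_pos_left hq hq1a4]

theorem tendsto_hfunDerivFactor_nhdsGT_zero (hθ : 1 < θ) (ha1 : 0 < a1)
    (hp1 : 2 * θ < p1) (hq1 : 2 * θ < q1) :
    Tendsto (hfunDerivFactor θ a1 a2 a3 a4 p1 q1) (𝓝[>] 0) atTop := by
  have hsing : Tendsto (fun t : ℝ => 2 * a1 * t ^ (2 - 2 * θ)) (𝓝[>] 0) atTop :=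
    (tendsto_rpow_neg_nhdsGT_zero (by linarith)).const_mul_atTop (by linarith)
  have hrest : Continuous fun t : ℝ =>
      2 * θ * a2 - p1 * a3 * t ^ (p1 - 2 * θ) - q1 * a4 * t ^ (q1 - 2 * θ) := by
    have := continuous_rpow_const (q := p1 - 2 * θ) (by linarith)
    have := continuous_rpow_const (q := q1 - 2 * θ) (by linarith)
    fun_prop
  refine (hsing.atTop_add (hrest.tendsto 0 |>.mono_left nhdsWithin_le_nhds)).congr fun t => ?_
  simp only [hfunDerivFactor]
  ring

theorem tendsto_hfunDerivFactor_atTop (hθ : 1 < θ) (ha3 : 0 < a3) (ha4 : 0 < a4)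
    (hp1 : 2 * θ < p1) (hq1 : 2 * θ < q1) :
    Tendsto (hfunDerivFactor θ a1 a2 a3 a4 p1 q1) atTop atBot := by
  have hbounded : Tendsto (fun t : ℝ => 2 * a1 * t ^ (-(2 * θ - 2)) + 2 * θ * a2) atTop
      (𝓝 (2 * a1 * 0 + 2 * θ * a2)) :=
    ((tendsto_rpow_neg_atTop (by linarith)).const_mul _).add_const _
  have hgrowth : Tendsto (fun t : ℝ => p1 * a3 * t ^ (p1 - 2 * θ) + q1 * a4 * t ^ (q1 - 2 * θ))
      atTop atTop :=
    ((tendsto_rpow_atTop (by linarith)).const_mul_atTop (mul_pos (by linarith) ha3)).atTop_add_atTop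
      ((tendsto_rpow_atTop (by linarith)).const_mul_atTop (mul_pos (by linarith) ha4))
  refine (hbounded.add_atBot (tendsto_neg_atTop_atBot.comp hgrowth)).congr fun t => ?_
  simp only [hfunDerivFactor, Function.comp_apply, neg_sub]
  ring_nf

theorem exists_forall_hfun_lt (hθ : 1 < θ) (ha1 : 0 < a1) (ha3 : 0 < a3) (ha4 : 0 < a4)
    (hp1 : 2 * θ < p1) (hq1 : 2 * θ < q1) :
    ∃ c > 0, ∀ t ∈ Ici 0, t ≠ c → hfun θ a1 a2 a3 a4 p1 q1 t < hfun θ a1 a2 a3 a4 p1 q1 c := by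
  obtain ⟨c, hc : 0 < c, hkc⟩ := exists_mem_Ioi_eq_zero_of_tendsto continuousOn_hfunDerivFactor
    (tendsto_hfunDerivFactor_nhdsGT_zero (a2 := a2) (a3 := a3) (a4 := a4) hθ ha1 hp1 hq1)
    (tendsto_hfunDerivFactor_atTop (a1 := a1) (a2 := a2) hθ ha3 ha4 hp1 hq1)
  have hk := strictAntiOn_hfunDerivFactor (a2 := a2) hθ ha1 ha3 ha4 hp1 hq1
  have hcont : Continuous (hfun θ a1 a2 a3 a4 p1 q1) :=
    continuous_hfun (by linarith) (by linarith) (by linarith)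
  have hmono : StrictMonoOn (hfun θ a1 a2 a3 a4 p1 q1) (Icc 0 c) :=
    strictMonoOn_Icc_of_hasDerivAt_pos hcont.continuousOn (fun t ht => hasDerivAt_hfun ht.1)
      fun t ht => mul_pos (rpow_pos_of_pos ht.1 _) (hkc ▸ hk ht.1 hc ht.2)
  have hanti : StrictAntiOn (hfun θ a1 a2 a3 a4 p1 q1) (Ici c) :=
    strictAntiOn_Ici_of_hasDerivAt_neg hcont.continuousOn
      (fun t ht => hasDerivAt_hfun (hc.trans ht))
      fun t ht => mul_neg_of_pos_of_neg (rpow_pos_of_pos (hc.trans ht) _)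
        (hkc ▸ hk hc (hc.trans ht) ht)
  exact ⟨c, hc, fun t ht htc => lt_of_strictMonoOn_Icc_of_strictAntiOn_Ici hmono hanti ht htc⟩

end hfun

theorem statement16_general
    (θ a1 a2 a3 a4 p1 q1 : ℝ)
    (hθ : 1 < θ)
    (ha1 : 0 < a1) (ha3 : 0 < a3) (ha4 : 0 < a4)
    (hp1 : 2 * θ < p1) (hq1 : 2 * θ < q1) :
    ∃ tM ∈ Set.Ici (0 : ℝ),
      0 < hfun θ a1 a2 a3 a4 p1 q1 tM ∧
      (∀ t ∈ Set.Ici (0 : ℝ), hfun θ a1 a2 a3 a4 p1 q1 t ≤ hfun θ a1 a2 a3 a4 p1 q1 tM) ∧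
      ∀ t ∈ Set.Ici (0 : ℝ),
        (∀ s ∈ Set.Ici (0 : ℝ), hfun θ a1 a2 a3 a4 p1 q1 s ≤ hfun θ a1 a2 a3 a4 p1 q1 t) →
        t = tM := by
  obtain ⟨c, hc, hlt⟩ := exists_forall_hfun_lt (a2 := a2) hθ ha1 ha3 ha4 hp1 hq1
  refine ⟨c, hc.le, ?_, fun t ht => ?_, fun t ht hmax => ?_⟩
  · simpa only [hfun_zero (by linarith : θ ≠ 0) (by linarith : p1 ≠ 0) (by linarith : q1 ≠ 0)]
      using hlt 0 self_mem_Ici hc.ne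
  · rcases eq_or_ne t c with rfl | htc
    exacts [le_rfl, (hlt t ht htc).le]
  · by_contra htc
    exact (hmax c hc.le).not_gt (hlt t ht htc)

/-- **Lemma 5.1** (Statement 16): for `p₁, q₁ ∈ (2θ, ∞)`, `h` has a unique
maximum point on `[0,∞)`, at a positive level. -/
theorem statement16
    (θ a1 a2 a3 a4 p1 q1 : ℝ)
    (hθ : 1 < θ)
    (ha1 : 0 < a1) (ha2 : 0 < a2) (ha3 : 0 < a3) (ha4 : 0 < a4)
    (hp1 : 2 * θ < p1) (hq1 : 2 * θ < q1) :
    ∃ tM ∈ Set.Ici (0 : ℝ),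
      0 < hfun θ a1 a2 a3 a4 p1 q1 tM ∧
      (∀ t ∈ Set.Ici (0 : ℝ), hfun θ a1 a2 a3 a4 p1 q1 t ≤ hfun θ a1 a2 a3 a4 p1 q1 tM) ∧
      ∀ t ∈ Set.Ici (0 : ℝ),
        (∀ s ∈ Set.Ici (0 : ℝ), hfun θ a1 a2 a3 a4 p1 q1 s ≤ hfun θ a1 a2 a3 a4 p1 q1 t) →
        t = tM :=
  statement16_general θ a1 a2 a3 a4 p1 q1 hθ ha1 ha3 ha4 hp1 hq1
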